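/- arXiv:2407.12527 — 3 statements merged into one kernel-verified Lean document; each statement's English description precedes it below -/
import Mathlib

section
/- Let ψ solve μ ∂ₓψ + σ_T ψ = σ_r φ on [x_L, x_R] with ψ(x_L)=0, where μ > 0 and σ_T, σ_r are continuous with 0 < σ_r ≤ σ_T. Then the weighted L² norm of ψ with weight σ_T is at most that of φ: ∫ σ_T |ψ|² dx ≤ ∫ σ_T |φ|² dx. -/
/-!
Writing `S(x) = ∫_{x_L}^x σ_T`, the solution is `ψ = (1/μ) e^{-S/μ} ∫_{x_L}^x e^{S/μ} σ_r φ`, hence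
`μ ψ' + σ_T ψ = σ_r φ`. Multiplying by `ψ` and integrating gives the energy identity
`μ ψ(x_R)²/2 + ∫ σ_T ψ² = ∫ σ_r φ ψ`, and `σ_r φ ψ ≤ σ_T (φ² + ψ²)/2` since `0 ≤ σ_r ≤ σ_T`.
-/

open intervalIntegral Real Set

noncomputable def transportSolution (μ a : ℝ) (T r f : ℝ → ℝ) (x : ℝ) : ℝ :=
  (1 / μ) * ∫ y in a..x, exp (-(1 / μ) * ∫ z in y..x, T z) * (r y * f y)

section TransportSolution

variable {μ a b : ℝ} {T r f : ℝ → ℝ}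

@[simp]
theorem transportSolution_self : transportSolution μ a T r f a = 0 := by
  simp [transportSolution]

theorem transportSolution_congr {T' r' f' : ℝ → ℝ} (hT : EqOn T T' (Icc a b))
    (hr : EqOn r r' (Icc a b)) (hf : EqOn f f' (Icc a b)) :
    EqOn (transportSolution μ a T r f) (transportSolution μ a T' r' f') (Icc a b) := by
  intro x hx
  refine congrArg _ (integral_congr fun y hy => ?_)
  rw [uIcc_of_le hx.1] at hy
  have hyI : y ∈ Icc a b := ⟨hy.1, hy.2.trans hx.2⟩
  have hTyx : ∫ z in y..x, T z = ∫ z in y..x, T' z := integral_congr fun z hz => by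
    rw [uIcc_of_le hy.2] at hz
    exact hT ⟨hy.1.trans hz.1, hz.2.trans hx.2⟩
  simp only [hTyx, hr hyI, hf hyI]

theorem transportSolution_eq_integratingFactor (hT : Continuous T) (x : ℝ) :
    transportSolution μ a T r f x = (1 / μ) * exp (-(1 / μ) * ∫ z in a..x, T z) *
      ∫ y in a..x, exp ((1 / μ) * ∫ z in a..y, T z) * (r y * f y) := by
  rw [transportSolution, mul_assoc]
  congr 1
  rw [← integral_const_mul]
  refine integral_congr fun y _ => ?_
  rw [← integral_interval_sub_left (hT.intervalIntegrable a x) (hT.intervalIntegrable a y)]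
  simp only [← mul_assoc, ← exp_add]
  ring_nf

theorem hasDerivAt_transportSolution (hT : Continuous T) (hr : Continuous r) (hf : Continuous f)
    (x : ℝ) :
    HasDerivAt (transportSolution μ a T r f)
      ((1 / μ) * (r x * f x - T x * transportSolution μ a T r f x)) x := by
  set S : ℝ → ℝ := fun x => ∫ z in a..x, T z
  have hS : ∀ x, HasDerivAt S (T x) x := fun x => (hT.integral_hasStrictDerivAt a x).hasDerivAt
  have hSc : Continuous S := continuous_iff_continuousAt.2 fun x => (hS x).continuousAt
  have hsrc : Continuous fun y => exp ((1 / μ) * S y) * (r y * f y) := by fun_prop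
  have hE := ((hS x).const_mul (-(1 / μ))).exp.const_mul (1 / μ)
  have hI := hsrc.integral_hasStrictDerivAt a x |>.hasDerivAt
  have hEE : exp (-(1 / μ) * S x) * exp ((1 / μ) * S x) = 1 := by
    rw [← exp_add, neg_mul, neg_add_cancel, exp_zero]
  rw [transportSolution_eq_integratingFactor hT x,
    funext (transportSolution_eq_integratingFactor hT)]
  refine (hE.mul hI).congr_deriv ?_
  linear_combination (1 / μ) * (r x * f x) * hEE

end TransportSolution

theorem integral_mul_sq_le_integral_mul_of_hasDerivAt {μ a b : ℝ} (hμ : 0 < μ)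
    {T g ψ : ℝ → ℝ} (hT : Continuous T) (hg : Continuous g)
    (hψ : ∀ x, HasDerivAt ψ ((1 / μ) * (g x - T x * ψ x)) x) (hψa : ψ a = 0) :
    ∫ x in a..b, T x * ψ x ^ 2 ≤ ∫ x in a..b, g x * ψ x := by
  have hψc : Continuous ψ := continuous_iff_continuousAt.2 fun x => (hψ x).continuousAt
  have henergy : ∀ x, HasDerivAt (fun x => μ / 2 * ψ x ^ 2) (g x * ψ x - T x * ψ x ^ 2) x := by
    intro x
    refine (((hψ x).pow 2).const_mul (μ / 2)).congr_deriv ?_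
    field_simp
    ring
  have hFTC := integral_eq_sub_of_hasDerivAt (fun x _ => henergy x)
    (((hg.mul hψc).sub (hT.mul (hψc.pow 2))).intervalIntegrable a b)
  rw [integral_sub (f := fun x => g x * ψ x) (g := fun x => T x * ψ x ^ 2)
    ((hg.mul hψc).intervalIntegrable a b) ((hT.mul (hψc.pow 2)).intervalIntegrable a b), hψa]
    at hFTC
  nlinarith [sq_nonneg (ψ b)]

theorem two_mul_mul_mul_le_mul_add_sq {r T f ψ : ℝ} (hr : 0 ≤ r) (hrT : r ≤ T) :
    2 * (r * f * ψ) ≤ T * (f ^ 2 + ψ ^ 2) := by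
  nlinarith [mul_nonneg hr (sq_nonneg (f - ψ)),
    mul_nonneg (sub_nonneg.2 hrT) (add_nonneg (sq_nonneg f) (sq_nonneg ψ))]

theorem integral_mul_sq_transportSolution_le {μ a b : ℝ} (hab : a ≤ b) (hμ : 0 < μ)
    {T r f : ℝ → ℝ} (hT : Continuous T) (hr : Continuous r) (hf : Continuous f)
    (hr0 : ∀ x ∈ Icc a b, 0 ≤ r x) (hrT : ∀ x ∈ Icc a b, r x ≤ T x) :
    ∫ x in a..b, T x * transportSolution μ a T r f x ^ 2 ≤ ∫ x in a..b, T x * f x ^ 2 := by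
  set ψ := transportSolution μ a T r f
  have hψ := hasDerivAt_transportSolution (μ := μ) (a := a) hT hr hf
  have hψc : Continuous ψ := continuous_iff_continuousAt.2 fun x => (hψ x).continuousAt
  have henergy := integral_mul_sq_le_integral_mul_of_hasDerivAt (b := b)
    (g := fun x => r x * f x) hμ hT (hr.mul hf) hψ transportSolution_self
  have hsource : ∫ x in a..b, r x * f x * ψ x ≤ ∫ x in a..b, T x * (f x ^ 2 + ψ x ^ 2) / 2 :=
    integral_mono_on hab (((hr.mul hf).mul hψc).intervalIntegrable a b)
      (((hT.mul ((hf.pow 2).add (hψc.pow 2))).div_const 2).intervalIntegrable a b)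
      fun x hx => by
        linarith [two_mul_mul_mul_le_mul_add_sq (f := f x) (ψ := ψ x) (hr0 x hx) (hrT x hx)]
  simp only [mul_add, add_div] at hsource
  rw [integral_add (f := fun x => T x * f x ^ 2 / 2) (g := fun x => T x * ψ x ^ 2 / 2)
    (((hT.mul (hf.pow 2)).div_const 2).intervalIntegrable a b)
    (((hT.mul (hψc.pow 2)).div_const 2).intervalIntegrable a b), integral_div, integral_div]
    at hsource
  linarith

theorem ContinuousOn.exists_continuous_eqOn_Icc {a b : ℝ} {f : ℝ → ℝ} (hab : a ≤ b)
    (hf : ContinuousOn f (Icc a b)) : ∃ g : ℝ → ℝ, Continuous g ∧ EqOn g f (Icc a b) :=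
  ⟨IccExtend hab ((Icc a b).domRestrict f), hf.domRestrict.Icc_extend',
    fun _ hx => IccExtend_of_mem _ _ hx⟩

/-- For `μ > 0`, the transport solution
`ψ(x) = (1/μ) ∫_{x_L}^x exp(-(1/μ)∫_y^x σ_T) σ_r(y) φ(y) dy`
(which solves `μ ψ' + σ_T ψ = σ_r φ`, `ψ(x_L) = 0`) satisfies
`∫ σ_T ψ² ≤ ∫ σ_T φ²` on `[x_L, x_R]`. -/
theorem stmt0 (xL xR : ℝ) (hx : xL < xR) (μ : ℝ) (hμ : 0 < μ)
    (σT σr φ : ℝ → ℝ)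
    (hσT : ContinuousOn σT (Set.Icc xL xR))
    (hσr : ContinuousOn σr (Set.Icc xL xR))
    (hφ : ContinuousOn φ (Set.Icc xL xR))
    (hpos : ∀ x ∈ Set.Icc xL xR, 0 < σr x)
    (hle : ∀ x ∈ Set.Icc xL xR, σr x ≤ σT x)
    (ψ : ℝ → ℝ)
    (hψ : ∀ x ∈ Set.Icc xL xR,
      ψ x = (1 / μ) * ∫ y in xL..x,
        Real.exp (-(1 / μ) * ∫ z in y..x, σT z) * (σr y * φ y)) :
    (∫ x in xL..xR, σT x * (ψ x) ^ 2) ≤ ∫ x in xL..xR, σT x * (φ x) ^ 2 := by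
  obtain ⟨T, hTc, hT⟩ := hσT.exists_continuous_eqOn_Icc hx.le
  obtain ⟨r, hrc, hr⟩ := hσr.exists_continuous_eqOn_Icc hx.le
  obtain ⟨f, hfc, hf⟩ := hφ.exists_continuous_eqOn_Icc hx.le
  have hψT : EqOn ψ (transportSolution μ xL T r f) (Icc xL xR) := fun x hxI =>
    (hψ x hxI).trans (transportSolution_congr hT hr hf hxI).symm
  have key := integral_mul_sq_transportSolution_le hx.le hμ hTc hrc hfc
    (fun x hxI => hr hxI ▸ (hpos x hxI).le) (fun x hxI => hr hxI ▸ hT hxI ▸ hle x hxI)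
  calc ∫ x in xL..xR, σT x * ψ x ^ 2
      = ∫ x in xL..xR, T x * transportSolution μ xL T r f x ^ 2 :=
        integral_congr fun x hxI => by
          rw [uIcc_of_le hx.le] at hxI; simp only [hT hxI, hψT hxI]
    _ ≤ ∫ x in xL..xR, T x * f x ^ 2 := key
    _ = ∫ x in xL..xR, σT x * φ x ^ 2 :=
        integral_congr fun x hxI => by
          rw [uIcc_of_le hx.le] at hxI; simp only [hT hxI, hf hxI]
end

section
/- Let B be a separable Banach space and X₁,...,X_m independent B-valued random vectors with E‖X_j‖² < ∞. Setting S_m = X₁ + ... + X_m, one has E| ‖S_m‖ − E‖S_m‖ |² ≤ 4 Σ_{j=1}^m E‖X_j‖². -/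
/-!
Induct on the number of summands, conditioning on one of them at a time. For independent `Z`
and `T` the joint law is the product of the marginals, so the law of total variance splits
`Var ‖x + Z + T‖` into `E_z Var ‖x + z + T‖`, controlled by the induction hypothesis applied at
every shift `x + z`, and `Var_z E ‖x + z + T‖`, the variance of a `1`-Lipschitz function of `Z`,
hence at most `E ‖Z‖²`. This gives `Var ‖S_m‖ ≤ ∑ E ‖X_j‖²`.
-/

open MeasureTheory ProbabilityTheory

lemma LipschitzWith.integral {α E : Type*} [MeasurableSpace α] {μ : Measure α}
    [IsProbabilityMeasure μ] [PseudoMetricSpace E] {F : E → α → ℝ} {K : NNReal}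
    (hF : ∀ y, LipschitzWith K (F · y)) (hint : ∀ x, Integrable (F x) μ) :
    LipschitzWith K fun x => ∫ y, F x y ∂μ := by
  refine LipschitzWith.of_dist_le_mul fun x x' => ?_
  rw [Real.dist_eq, ← integral_sub (hint x) (hint x')]
  simpa using norm_integral_le_of_norm_le_const (μ := μ)
    (f := fun y => F x y - F x' y) (ae_of_all _ fun y => (hF y).dist_le_mul x x')

namespace ProbabilityTheory

lemma integral_sub_sq_eq_variance_add {Ω : Type*} [MeasurableSpace Ω] {μ : Measure Ω}
    [IsProbabilityMeasure μ] {X : Ω → ℝ} (hX : MemLp X 2 μ) (a : ℝ) :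
    ∫ ω, (X ω - a) ^ 2 ∂μ = Var[X; μ] + (μ[X] - a) ^ 2 := by
  have hXa : MemLp (fun ω => X ω - a) 2 μ := hX.sub (memLp_const a)
  rw [← variance_sub_const hX.aestronglyMeasurable a, variance_eq_sub hXa,
    integral_sub (hX.integrable one_le_two) (integrable_const a)]
  simp

lemma variance_le_integral_norm_sq_of_lipschitzWith {E : Type*} [NormedAddCommGroup E]
    [MeasurableSpace E] [OpensMeasurableSpace E] {ν : Measure E} [IsProbabilityMeasure ν]
    {g : E → ℝ} (hg : LipschitzWith 1 g) (hν : Integrable (fun x => ‖x‖ ^ 2) ν) :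
    Var[g; ν] ≤ ∫ x, ‖x‖ ^ 2 ∂ν := by
  have hgm : AEStronglyMeasurable g ν := hg.continuous.measurable.aestronglyMeasurable
  calc Var[g; ν] = Var[fun x => g x - g 0; ν] := (variance_sub_const hgm _).symm
    _ ≤ ∫ x, (g x - g 0) ^ 2 ∂ν := variance_le_expectation_sq (hgm.sub aestronglyMeasurable_const)
    _ ≤ ∫ x, ‖x‖ ^ 2 ∂ν := by
      refine integral_mono_of_nonneg (ae_of_all _ fun x => sq_nonneg _) hν
        (ae_of_all _ fun x => ?_)
      have h := pow_le_pow_left₀ dist_nonneg (hg.dist_le_mul x 0) 2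
      rwa [Real.dist_eq, sq_abs, NNReal.coe_one, one_mul, dist_zero_right] at h

section Product

variable {α β : Type*} [MeasurableSpace α] [MeasurableSpace β] {ν : Measure α} {μ : Measure β}
  [IsProbabilityMeasure ν] [IsProbabilityMeasure μ]

lemma integral_variance_add_variance_integral_prod {f : α × β → ℝ} (hf : MemLp f 2 (ν.prod μ)) :
    ∫ x, Var[fun y => f (x, y); μ] ∂ν + Var[fun x => ∫ y, f (x, y) ∂μ; ν] =
      Var[f; ν.prod μ] := by
  set c := ∫ p, f p ∂(ν.prod μ)
  set g := fun x => ∫ y, f (x, y) ∂μ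
  have hsq : Integrable (fun p => (f p - c) ^ 2) (ν.prod μ) :=
    (hf.sub (memLp_const c)).integrable_sq
  have hslice : ∀ᵐ x ∂ν, MemLp (fun y => f (x, y)) 2 μ := by
    filter_upwards [hsq.prod_right_ae, hf.aestronglyMeasurable.prodMk_left] with x hx hxm
    have hxc : MemLp (fun y => f (x, y) - c) 2 μ :=
      (memLp_two_iff_integrable_sq (hxm.sub aestronglyMeasurable_const)).2 hx
    convert hxc.add (memLp_const c) using 1
    ext y
    simp
  have hsplit : ∀ᵐ x ∂ν,
      ∫ y, (f (x, y) - c) ^ 2 ∂μ = Var[fun y => f (x, y); μ] + (g x - c) ^ 2 := by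
    filter_upwards [hslice] with x hx using integral_sub_sq_eq_variance_add hx c
  have hgm : AEStronglyMeasurable g ν := hf.aestronglyMeasurable.integral_prod_right'
  have hgc : ∫ x, g x ∂ν = c := (integral_prod f (hf.integrable one_le_two)).symm
  have hgsq : Integrable (fun x => (g x - c) ^ 2) ν := by
    refine hsq.integral_prod_left.mono' ((hgm.sub aestronglyMeasurable_const).pow 2) ?_
    filter_upwards [hsplit] with x hx
    rw [hx, Real.norm_of_nonneg (sq_nonneg _)]
    linarith [variance_nonneg (fun y => f (x, y)) μ]
  have hvar : Integrable (fun x => Var[fun y => f (x, y); μ]) ν := by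
    refine (hsq.integral_prod_left.sub hgsq).congr ?_
    filter_upwards [hsplit] with x hx
    simp [hx]
  rw [variance_eq_integral hgm.aemeasurable, hgc, ← integral_add hvar hgsq,
    variance_eq_integral hf.aemeasurable, integral_prod _ hsq]
  exact integral_congr_ae (hsplit.mono fun x hx => hx.symm)

end Product

section Norm

variable {Ω B : Type*} [MeasurableSpace Ω] {P : Measure Ω} [IsProbabilityMeasure P]
  [NormedAddCommGroup B] [MeasurableSpace B] [BorelSpace B] [SecondCountableTopology B]

lemma IndepFun.variance_norm_add_add_le {Z T : Ω → B} (hZ : Measurable Z) (hT : Measurable T)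
    (hZT : IndepFun Z T P) (hZ2 : MemLp Z 2 P) (hT2 : MemLp T 2 P) {K : ℝ}
    (hK : ∀ x, Var[fun ω => ‖x + T ω‖; P] ≤ K) (x : B) :
    Var[fun ω => ‖x + Z ω + T ω‖; P] ≤ K + ∫ ω, ‖Z ω‖ ^ 2 ∂P := by
  set ν := P.map Z
  set μ := P.map T
  have : IsProbabilityMeasure ν := Measure.isProbabilityMeasure_map hZ.aemeasurable
  have : IsProbabilityMeasure μ := Measure.isProbabilityMeasure_map hT.aemeasurable
  have hZTm : Measurable fun ω => (Z ω, T ω) := hZ.prodMk hT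
  have hf : Measurable fun p : B × B => ‖x + p.1 + p.2‖ := by fun_prop
  have hlaw : P.map (fun ω => (Z ω, T ω)) = ν.prod μ :=
    (indepFun_iff_map_prod_eq_prod_map_map hZ.aemeasurable hT.aemeasurable).1 hZT
  have hfL2 : MemLp (fun p : B × B => ‖x + p.1 + p.2‖) 2 (ν.prod μ) := by
    rw [← hlaw, memLp_map_measure_iff hf.aestronglyMeasurable hZTm.aemeasurable]
    exact (((memLp_const x).add hZ2).add hT2).norm
  have hslice : ∀ z, Var[fun y => ‖x + z + y‖; μ] ≤ K := fun z => by
    rw [variance_map (by fun_prop) hT.aemeasurable]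
    exact hK (x + z)
  have hmean : Var[fun z => ∫ y, ‖x + z + y‖ ∂μ; ν] ≤ ∫ ω, ‖Z ω‖ ^ 2 ∂P := by
    have hlip : LipschitzWith 1 fun z => ∫ y, ‖x + z + y‖ ∂μ := by
      refine LipschitzWith.integral (fun y => LipschitzWith.of_dist_le_mul fun z z' => ?_)
        fun z => ?_
      · simpa [dist_eq_norm] using abs_norm_sub_norm_le (x + z + y) (x + z' + y)
      · exact (integrable_map_measure (by fun_prop) hT.aemeasurable).2
          ((integrable_const (x + z)).add (hT2.integrable one_le_two)).norm
    have hν : Integrable (fun z => ‖z‖ ^ 2) ν := by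
      rw [integrable_map_measure (by fun_prop) hZ.aemeasurable]
      exact (memLp_two_iff_integrable_sq_norm hZ2.1).1 hZ2
    calc _ ≤ ∫ z, ‖z‖ ^ 2 ∂ν := variance_le_integral_norm_sq_of_lipschitzWith hlip hν
      _ = ∫ ω, ‖Z ω‖ ^ 2 ∂P := integral_map hZ.aemeasurable (by fun_prop)
  have hslices : ∫ z, Var[fun y => ‖x + z + y‖; μ] ∂ν ≤ K := by
    simpa using integral_mono_of_nonneg (μ := ν) (ae_of_all _ fun z => variance_nonneg _ _)
      (integrable_const K) (ae_of_all _ hslice)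
  calc Var[fun ω => ‖x + Z ω + T ω‖; P]
      = Var[fun p : B × B => ‖x + p.1 + p.2‖; ν.prod μ] := by
        rw [← hlaw, variance_map hf.aemeasurable hZTm.aemeasurable]
        rfl
    _ = ∫ z, Var[fun y => ‖x + z + y‖; μ] ∂ν + Var[fun z => ∫ y, ‖x + z + y‖ ∂μ; ν] :=
        (integral_variance_add_variance_integral_prod hfL2).symm
    _ ≤ K + ∫ ω, ‖Z ω‖ ^ 2 ∂P := add_le_add hslices hmean

lemma iIndepFun.variance_norm_add_sum_le {ι : Type*} {X : ι → Ω → B}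
    (hmeas : ∀ i, Measurable (X i)) (hindep : iIndepFun X P) (hX2 : ∀ i, MemLp (X i) 2 P)
    (s : Finset ι) (x : B) :
    Var[fun ω => ‖x + ∑ i ∈ s, X i ω‖; P] ≤ ∑ i ∈ s, ∫ ω, ‖X i ω‖ ^ 2 ∂P := by
  classical
  induction s using Finset.induction_on generalizing x with
  | empty => simp [variance_eq_integral aemeasurable_const]
  | insert i s hi ih =>
    have hind : IndepFun (X i) (fun ω => ∑ j ∈ s, X j ω) P := by
      simpa only [Finset.sum_fn] using (hindep.indepFun_finsetSum_of_notMem hmeas hi).symm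
    simp_rw [Finset.sum_insert hi, ← add_assoc]
    rw [add_comm]
    exact hind.variance_norm_add_add_le (hmeas i) (Finset.measurable_sum s fun j _ => hmeas j)
      (hX2 i) (memLp_finsetSum s fun j _ => hX2 j) ih x

end Norm

end ProbabilityTheory

/-- for independent `B`-valued random vectors `X₁,…,X_m` with
`E‖X_j‖² < ∞` and `S_m = Σ_j X_j`, one has
`E|‖S_m‖ − E‖S_m‖|² ≤ 4 Σ_j E‖X_j‖²`. -/
theorem stmt4 {Ω : Type*} [MeasurableSpace Ω] (P : Measure Ω) [IsProbabilityMeasure P]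
    {B : Type*} [NormedAddCommGroup B] [MeasurableSpace B] [BorelSpace B]
    (hsep : TopologicalSpace.SeparableSpace B)
    (m : ℕ) (X : Fin m → Ω → B)
    (hmeas : ∀ j, Measurable (X j))
    (hindep : iIndepFun X P)
    (hL2 : ∀ j, Integrable (fun ω => ‖X j ω‖ ^ 2) P)
    (S : Ω → B) (hS : ∀ ω, S ω = ∑ j, X j ω) :
    (∫ ω, (‖S ω‖ - ∫ ω', ‖S ω'‖ ∂P) ^ 2 ∂P) ≤
      4 * ∑ j, ∫ ω, ‖X j ω‖ ^ 2 ∂P := by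
  have : SecondCountableTopology B := UniformSpace.secondCountable_of_separable B
  have hX2 (j : Fin m) : MemLp (X j) 2 P :=
    (memLp_two_iff_integrable_sq_norm (hmeas j).aestronglyMeasurable).2 (hL2 j)
  obtain rfl : S = fun ω => ∑ j, X j ω := funext hS
  have hSm : Measurable fun ω => ∑ j, X j ω := Finset.measurable_sum _ fun j _ => hmeas j
  rw [← variance_eq_integral hSm.norm.aemeasurable]
  calc Var[fun ω => ‖∑ j, X j ω‖; P] ≤ ∑ j, ∫ ω, ‖X j ω‖ ^ 2 ∂P := by
        simpa using hindep.variance_norm_add_sum_le hmeas hX2 Finset.univ 0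
    _ ≤ 4 * ∑ j, ∫ ω, ‖X j ω‖ ^ 2 ∂P :=
        le_mul_of_one_le_left (Finset.sum_nonneg fun j _ => integral_nonneg fun ω => by positivity)
          (by norm_num)
end

section
/- Let M(x) = ∫_{x_L}^x σ_T(y) dy where σ_T is continuous and bounded below by a positive constant on [x_L, x_R], and define B_μ(x) = exp(−M(x)/μ) for μ > 0. Then for 0 < μ₁ < μ₂ with μ₂/μ₁ bounded by a constant c, ∫_{x_L}^{x_R} |B_{μ₁}(x) − B_{μ₂}(x)|² σ_T(x) dx ≤ C (μ₂ − μ₁)² μ₂ / μ₁², with C depending only on c, σ_T and x_R − x_L. -/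
open MeasureTheory intervalIntegral Real

private lemma key_pt (m μ₁ μ₂ : ℝ) (hm : 0 ≤ m) (h1 : 0 < μ₁) (h12 : μ₁ < μ₂) :
    (Real.exp (-m/μ₁) - Real.exp (-m/μ₂))^2 ≤
      4 * ((μ₂-μ₁)/(μ₁*μ₂))^2 * μ₂^2 * Real.exp (-(m/μ₂)) := by
  have h2 : 0 < μ₂ := h1.trans h12
  have ha0 : 0 ≤ m * (μ₂ - μ₁) / (μ₁ * μ₂) := by
    apply div_nonneg (mul_nonneg hm (by linarith)) (by positivity)
  set a : ℝ := m * (μ₂ - μ₁) / (μ₁ * μ₂) with ha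
  have hsplit : -m/μ₁ = -m/μ₂ + (-a) := by rw [ha]; field_simp; ring
  have h₁ : Real.exp (-m/μ₁) - Real.exp (-m/μ₂)
      = Real.exp (-m/μ₂) * (Real.exp (-a) - 1) := by
    rw [hsplit, Real.exp_add]; ring
  have h7 := Real.add_one_le_exp (-a)
  have h8 : Real.exp (-a) ≤ 1 := by
    calc Real.exp (-a) ≤ Real.exp 0 := Real.exp_le_exp.2 (by linarith)
      _ = 1 := Real.exp_zero
  have habs : |Real.exp (-a) - 1| ≤ a := by
    rw [abs_of_nonpos (by linarith)]; linarith
  have hsq : (Real.exp (-m/μ₁) - Real.exp (-m/μ₂))^2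
      ≤ Real.exp (-m/μ₂)^2 * a^2 := by
    rw [h₁, mul_pow]
    have h6 : (Real.exp (-a) - 1)^2 ≤ a^2 := by
      rw [← sq_abs]; exact pow_le_pow_left₀ (abs_nonneg _) habs 2
    exact mul_le_mul_of_nonneg_left h6 (by positivity)
  have hz : m^2 * Real.exp (-m/μ₂)^2 ≤ 4 * μ₂^2 * Real.exp (-(m/μ₂)) := by
    set z : ℝ := m / μ₂ with hzdef
    have hz0 : 0 ≤ z := by positivity
    have h4 : z^2 ≤ 4 * Real.exp z := by
      have h5 : z/2 ≤ Real.exp (z/2) := by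
        have := Real.add_one_le_exp (z/2); linarith
      have := mul_self_le_mul_self (by linarith) h5
      rw [← Real.exp_add, show z/2+z/2 = z by ring] at this
      nlinarith [this]
    have h4' : z^2 * Real.exp (-z) ≤ 4 := by
      have hez : Real.exp z * Real.exp (-z) = 1 := by
        rw [← Real.exp_add]; simp
      nlinarith [Real.exp_pos (-z), mul_le_mul_of_nonneg_right h4 (Real.exp_pos (-z)).le]
    have hm2 : m = z * μ₂ := by rw [hzdef, div_mul_cancel₀ m h2.ne']
    have hgoal : -m/μ₂ = -z := by rw [hzdef]; ring
    rw [hgoal, show -(m/μ₂) = -z by rw [hzdef], hm2]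
    calc (z*μ₂)^2 * Real.exp (-z)^2
        = (z^2 * Real.exp (-z)) * (μ₂^2 * Real.exp (-z)) := by ring
      _ ≤ 4 * (μ₂^2 * Real.exp (-z)) := mul_le_mul_of_nonneg_right h4' (by positivity)
      _ = 4 * μ₂^2 * Real.exp (-z) := by ring
  calc (Real.exp (-m/μ₁) - Real.exp (-m/μ₂))^2 ≤ Real.exp (-m/μ₂)^2 * a^2 := hsq
    _ = ((μ₂-μ₁)/(μ₁*μ₂))^2 * (m^2 * Real.exp (-m/μ₂)^2) := by rw [ha]; ring
    _ ≤ ((μ₂-μ₁)/(μ₁*μ₂))^2 * (4 * μ₂^2 * Real.exp (-(m/μ₂))) := by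
        apply mul_le_mul_of_nonneg_left hz (by positivity)
    _ = 4 * ((μ₂-μ₁)/(μ₁*μ₂))^2 * μ₂^2 * Real.exp (-(m/μ₂)) := by ring

/-- for `B_μ(x) = exp(−M(x)/μ)` with `M(x) = ∫_{x_L}^x σ_T`,
`σ_T` continuous and bounded below by a positive constant, and `0 < μ₁ < μ₂`
with `μ₂/μ₁ ≤ c`, one has
`∫ |B_{μ₁} − B_{μ₂}|² σ_T dx ≤ C (μ₂−μ₁)² μ₂ / μ₁²`
for a constant `C` depending only on `c`, `σ_T` and `x_R − x_L`. -/
theorem stmt11 (xL xR : ℝ) (hx : xL < xR) (σT : ℝ → ℝ)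
    (hσT : ContinuousOn σT (Set.Icc xL xR))
    (σmin : ℝ) (hσmin : 0 < σmin)
    (hlb : ∀ x ∈ Set.Icc xL xR, σmin ≤ σT x)
    (c : ℝ) (hc : 1 ≤ c)
    (M : ℝ → ℝ) (hM : ∀ x, M x = ∫ y in xL..x, σT y)
    (B : ℝ → ℝ → ℝ) (hB : ∀ μ x, B μ x = Real.exp (-(M x) / μ)) :
    ∃ C : ℝ, 0 < C ∧ ∀ μ₁ μ₂ : ℝ, 0 < μ₁ → μ₁ < μ₂ → μ₂ ≤ c * μ₁ →
      (∫ x in xL..xR, (B μ₁ x - B μ₂ x) ^ 2 * σT x) ≤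
        C * (μ₂ - μ₁) ^ 2 * μ₂ / μ₁ ^ 2 := by
  refine ⟨4, by norm_num, ?_⟩
  intro μ₁ μ₂ h1 h12 _
  have h2 : 0 < μ₂ := h1.trans h12
  set σ' : ℝ → ℝ := Set.IccExtend hx.le ((Set.Icc xL xR).restrict σT) with hσ'
  have hσ'cont : Continuous σ' := continuous_IccExtend_iff.2 hσT.restrict
  have hσ'eq : ∀ x ∈ Set.Icc xL xR, σ' x = σT x := by
    intro x hx'
    rw [hσ', Set.IccExtend_of_mem _ _ hx']
    rfl
  have hσ'nonneg : ∀ x, 0 ≤ σ' x := by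
    intro x
    have : σ' x = σT (Set.projIcc xL xR hx.le x) := rfl
    rw [this]
    exact le_trans hσmin.le (hlb _ (Set.projIcc xL xR hx.le x).2)
  set N : ℝ → ℝ := fun x => ∫ y in xL..x, σ' y with hN
  have hNderiv : ∀ x, HasDerivAt N (σ' x) x := fun x =>
    intervalIntegral.integral_hasDerivAt_right (hσ'cont.intervalIntegrable _ _)
      (hσ'cont.stronglyMeasurable.stronglyMeasurableAtFilter) hσ'cont.continuousAt
  have hNcont : Continuous N := by
    rw [continuous_iff_continuousAt]; exact fun x => (hNderiv x).continuousAt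
  have hMN : ∀ x ∈ Set.Icc xL xR, M x = N x := by
    intro x hx'
    rw [hM, hN]
    apply intervalIntegral.integral_congr
    intro y hy
    have hy' : y ∈ Set.Icc xL xR := by
      rw [Set.uIcc_of_le hx'.1] at hy
      exact ⟨hy.1, hy.2.trans hx'.2⟩
    exact (hσ'eq y hy').symm
  have hNnonneg : ∀ x ∈ Set.Icc xL xR, 0 ≤ N x := by
    intro x hx'
    exact intervalIntegral.integral_nonneg hx'.1 (fun y _ => hσ'nonneg y)
  set K : ℝ := 4 * ((μ₂-μ₁)/(μ₁*μ₂))^2 * μ₂^2 with hK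
  have hK0 : 0 ≤ K := by positivity
  -- Step 1: rewrite the integral
  have step1 : (∫ x in xL..xR, (B μ₁ x - B μ₂ x) ^ 2 * σT x)
      = ∫ x in xL..xR, (Real.exp (-(N x)/μ₁) - Real.exp (-(N x)/μ₂))^2 * σ' x := by
    apply intervalIntegral.integral_congr
    intro x hx'
    rw [Set.uIcc_of_le hx.le] at hx'
    dsimp only
    rw [hB, hB, hMN x hx', hσ'eq x hx']
  -- Step 2: pointwise bound and monotonicity
  have cont1 : Continuous fun x => (Real.exp (-(N x)/μ₁) - Real.exp (-(N x)/μ₂))^2 * σ' x := by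
    fun_prop
  have cont2 : Continuous fun x => K * (σ' x * Real.exp (-(N x)/μ₂)) := by fun_prop
  have step2 : (∫ x in xL..xR, (Real.exp (-(N x)/μ₁) - Real.exp (-(N x)/μ₂))^2 * σ' x)
      ≤ ∫ x in xL..xR, K * (σ' x * Real.exp (-(N x)/μ₂)) := by
    apply intervalIntegral.integral_mono_on hx.le
      (cont1.intervalIntegrable _ _) (cont2.intervalIntegrable _ _)
    intro x hx'
    have key := key_pt (N x) μ₁ μ₂ (hNnonneg x hx') h1 h12
    have hσx := hσ'nonneg x
    calc (Real.exp (-(N x)/μ₁) - Real.exp (-(N x)/μ₂))^2 * σ' x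
        ≤ (4 * ((μ₂-μ₁)/(μ₁*μ₂))^2 * μ₂^2 * Real.exp (-(N x/μ₂))) * σ' x :=
          mul_le_mul_of_nonneg_right key hσx
      _ = K * (σ' x * Real.exp (-(N x)/μ₂)) := by rw [hK, neg_div]; ring
  -- Step 3: substitution
  have step3 : (∫ x in xL..xR, K * (σ' x * Real.exp (-(N x)/μ₂)))
      = K * ∫ u in (0:ℝ)..(N xR), Real.exp (-u/μ₂) := by
    rw [intervalIntegral.integral_const_mul]
    congr 1
    have hsub := intervalIntegral.integral_comp_smul_deriv
      (f := N) (f' := σ') (g := fun u => Real.exp (-u/μ₂)) (a := xL) (b := xR)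
      (fun x _ => hNderiv x) hσ'cont.continuousOn (by fun_prop)
    have hNxL : N xL = 0 := intervalIntegral.integral_same
    rw [hNxL] at hsub
    rw [← hsub]
    apply intervalIntegral.integral_congr
    intro x _
    simp [smul_eq_mul, Function.comp]
  -- Step 4: compute the exponential integral
  have step4 : (∫ u in (0:ℝ)..(N xR), Real.exp (-u/μ₂)) ≤ μ₂ := by
    have hF : ∀ u : ℝ, HasDerivAt (fun u => -μ₂ * Real.exp (-u/μ₂)) (Real.exp (-u/μ₂)) u := by
      intro u
      have hd : HasDerivAt (fun u : ℝ => -u/μ₂) (-1/μ₂) u := by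
        simpa using ((hasDerivAt_id u).neg.div_const μ₂)
      have := (hd.exp).const_mul (-μ₂)
      convert this using 1
      rfl
      rfl
      field_simp
    have := intervalIntegral.integral_eq_sub_of_hasDerivAt (a := (0:ℝ)) (b := N xR)
      (f := fun u => -μ₂ * Real.exp (-u/μ₂)) (fun u _ => hF u)
      ((by fun_prop : Continuous fun u => Real.exp (-u/μ₂)).intervalIntegrable _ _)
    rw [this]
    have := Real.exp_pos (-(N xR)/μ₂)
    have h0 : Real.exp (-(0:ℝ)/μ₂) = 1 := by norm_num
    rw [h0]
    nlinarith [Real.exp_pos (-(N xR)/μ₂)]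
  -- combine
  calc (∫ x in xL..xR, (B μ₁ x - B μ₂ x) ^ 2 * σT x)
      ≤ K * ∫ u in (0:ℝ)..(N xR), Real.exp (-u/μ₂) := by rw [step1]; exact step2.trans_eq step3
    _ ≤ K * μ₂ := mul_le_mul_of_nonneg_left step4 hK0
    _ = 4 * (μ₂ - μ₁) ^ 2 * μ₂ / μ₁ ^ 2 := by rw [hK]; field_simp
end
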